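/- For all n, k ≥ 0, g_{n,k}(x) := (x-1)^{-k} Σ_{j=0}^{k} C(k,j) f_{n+j}(x) is a polynomial with integer coefficients of degree 2n + k. -/

import Mathlib

/-!
Write `N_{n,k}` for `gNum n k`. By Pascal's rule `N_{n,k+1} = N_{n,k} + N_{n+1,k}`, i.e. passing from
`k` to `k + 1` applies `1 + E`, where the shift `E` in `n` satisfies `E² = (X² - 4X + 1)E - X²`. Hence
`(1 + E)² = (X - 1)(X - 3)(1 + E) - 2(X - 1)²`, so `g_{n,k+2} = (X - 3) g_{n,k+1} - 2 g_{n,k}`.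
Starting from `g_{n,0} = f_n`, of degree `2n`, and `g_{n,1} = (f_n + f_{n+1}) / (X - 1)`, a polynomial
because `f_n(1) = 2(-1)^n`, each step multiplies by the monic `X - 3` and so raises the degree by one.
-/

open Polynomial

/-- f 0 = 2, f 1 = X^2 - 4X + 1, f (n+2) = (X^2-4X+1) f (n+1) - X^2 f n. -/
noncomputable def madanF : ℕ → Polynomial ℤ
  | 0 => 2
  | 1 => X ^ 2 - 4 * X + 1
  | (n + 2) => (X ^ 2 - 4 * X + 1) * madanF (n + 1) - X ^ 2 * madanF n

/-- Σ_{j=0}^{k} C(k,j) f_{n+j}, the numerator of g_{n,k}. -/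
noncomputable def gNum (n k : ℕ) : Polynomial ℤ :=
  ∑ j ∈ Finset.range (k + 1), (k.choose j : ℤ) • madanF (n + j)

theorem degree_X_sub_C_mul_sub_C_mul {R : Type*} [CommRing R] [Nontrivial R] (a b : R)
    {p q : R[X]} {d : ℕ} (hp : p.degree = d) (hq : q.degree ≤ d) :
    ((X - C a) * p - C b * q).degree = ↑(d + 1) := by
  have hmul : ((X - C a) * p).degree = ↑(d + 1) := by
    rw [mul_comm, (monic_X_sub_C a).degree_mul, hp, degree_X_sub_C]; rfl
  have hlt : (C b * q).degree < ((X - C a) * p).degree := hmul ▸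
    calc (C b * q).degree ≤ q.degree := smul_eq_C_mul (p := q) b ▸ degree_smul_le b q
      _ ≤ d := hq
      _ < ↑(d + 1) := WithBot.coe_lt_coe.mpr d.lt_succ_self
  rw [degree_sub_eq_left_of_degree_lt hlt, hmul]

theorem eval_one_madanF : ∀ n, (madanF n).eval 1 = 2 * (-1) ^ n
  | 0 => by simp [madanF]
  | 1 => by simp [madanF]
  | n + 2 => by
      rw [madanF]
      simp only [eval_sub, eval_mul, eval_add, eval_pow, eval_X, eval_one, eval_ofNat,
        eval_one_madanF (n + 1), eval_one_madanF n]
      ring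

theorem degree_madanF : ∀ n, (madanF n).degree = ↑(2 * n)
  | 0 => by rw [madanF]; compute_degree!
  | 1 => by rw [madanF]; compute_degree!
  | n + 2 => by
      have hq : (X ^ 2 - 4 * X + 1 : ℤ[X]).degree = 2 := by compute_degree!
      have hlead : ((X ^ 2 - 4 * X + 1) * madanF (n + 1)).degree = ↑(2 * (n + 2)) := by
        rw [degree_mul, hq, degree_madanF (n + 1)]; norm_cast; ring_nf
      have htail : (X ^ 2 * madanF n).degree = ↑(2 * (n + 1)) := by
        rw [degree_mul, degree_X_pow, degree_madanF n]; norm_cast; ring_nf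
      have hlt : (X ^ 2 * madanF n).degree < ((X ^ 2 - 4 * X + 1) * madanF (n + 1)).degree := by
        rw [hlead, htail, Nat.cast_lt]; omega
      rw [madanF, degree_sub_eq_left_of_degree_lt hlt, hlead]

theorem gNum_zero_right (n : ℕ) : gNum n 0 = madanF n := by
  simp [gNum]

theorem gNum_succ_right (n k : ℕ) : gNum n (k + 1) = gNum n k + gNum (n + 1) k := by
  have hshift :
      gNum (n + 1) k = ∑ j ∈ Finset.range (k + 1), (k.choose j : ℤ) • madanF (n + (j + 1)) :=
    Finset.sum_congr rfl fun j _ => by rw [add_right_comm, add_assoc]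
  have hextend : gNum n k = ∑ j ∈ Finset.range (k + 2), (k.choose j : ℤ) • madanF (n + j) := by
    rw [Finset.sum_range_succ, Nat.choose_succ_self, Nat.cast_zero, zero_smul, add_zero, gNum]
  rw [hshift, hextend, gNum, Finset.sum_range_succ', Finset.sum_range_succ' _ (k + 1)]
  simp only [Nat.choose_succ_succ', Nat.cast_add, add_smul, Finset.sum_add_distrib,
    Nat.choose_zero_right]
  abel

theorem gNum_add_two_left (n k : ℕ) :
    gNum (n + 2) k = (X ^ 2 - 4 * X + 1) * gNum (n + 1) k - X ^ 2 * gNum n k := by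
  simp only [gNum, Finset.mul_sum, ← Finset.sum_sub_distrib, mul_smul_comm, ← smul_sub]
  refine Finset.sum_congr rfl fun j _ => ?_
  rw [show n + 2 + j = n + j + 2 by omega, madanF, show n + 1 + j = n + j + 1 by omega]

theorem gNum_add_two_right (n k : ℕ) :
    gNum n (k + 2) = (X - 1) * (X - 3) * gNum n (k + 1) - 2 * (X - 1) ^ 2 * gNum n k := by
  rw [gNum_succ_right n (k + 1), gNum_succ_right n k, gNum_succ_right (n + 1) k,
    gNum_add_two_left n k]
  ring

/-- The paper's `g_{n,k}`. -/
noncomputable def madanG (n : ℕ) : ℕ → ℤ[X]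
  | 0 => madanF n
  | 1 => (madanF n + madanF (n + 1)) /ₘ (X - C 1)
  | k + 2 => (X - C 3) * madanG n (k + 1) - C 2 * madanG n k

theorem X_sub_one_mul_madanG_one (n : ℕ) :
    (X - C 1) * madanG n 1 = madanF n + madanF (n + 1) := by
  refine mul_divByMonic_eq_iff_isRoot.mpr ?_
  simp only [IsRoot, eval_add, eval_one_madanF, pow_succ]
  ring

theorem X_sub_one_pow_mul_madanG (n : ℕ) : ∀ k, (X - 1) ^ k * madanG n k = gNum n k
  | 0 => by rw [pow_zero, one_mul, gNum_zero_right, madanG]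
  | 1 => by
      rw [pow_one, ← C_1, X_sub_one_mul_madanG_one, gNum_succ_right, gNum_zero_right,
        gNum_zero_right]
  | k + 2 => by
      rw [gNum_add_two_right, ← X_sub_one_pow_mul_madanG n (k + 1),
        ← X_sub_one_pow_mul_madanG n k, madanG, C_ofNat, C_ofNat]
      ring

theorem degree_madanG (n : ℕ) : ∀ k, (madanG n k).degree = ↑(2 * n + k)
  | 0 => degree_madanF n
  | 1 => by
      have hsum : (madanF n + madanF (n + 1)).degree = ↑(2 * n + 1 + 1) := by
        rw [degree_add_eq_right_of_degree_lt, degree_madanF]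
        · ring_nf
        · rw [degree_madanF, degree_madanF, Nat.cast_lt]; omega
      rw [← X_sub_one_mul_madanG_one, mul_comm, (monic_X_sub_C 1).degree_mul, degree_X_sub_C]
        at hsum
      exact WithBot.add_right_cancel WithBot.one_ne_bot hsum
  | k + 2 => by
      have := degree_X_sub_C_mul_sub_C_mul 3 2 (degree_madanG n (k + 1))
        ((degree_madanG n k).trans_le (Nat.cast_le.mpr (by omega)))
      rwa [← madanG, show 2 * n + (k + 1) + 1 = 2 * n + (k + 2) by omega] at this

theorem stmt_7 : ∀ n k : ℕ, ∃ g : Polynomial ℤ,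
    (X - 1) ^ k * g = gNum n k ∧ g.natDegree = 2 * n + k :=
  fun n k => ⟨madanG n k, X_sub_one_pow_mul_madanG n k,
    natDegree_eq_of_degree_eq_some (degree_madanG n k)⟩
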